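/- Let A ⊆ ω^ω be a non-empty countable class downwards closed under Turing reducibility. If for every f ∈ A and every finite subset B ⊆ {g ∈ A : g ≰_T f} there exists h ∈ A with h >_T f and g ⊕ h ∉ A for all g ∈ B, then A is a splitting class: for every f ∈ A and every finite B ⊆ {g ∈ A : g ≰_T f} there exist h₀, h₁ ∈ A with h₀, h₁ ≥_T f, h₀ ⊕ h₁ ∉ A, and g ⊕ h₀, g ⊕ h₁ ∉ A for all g ∈ B. -/

import Mathlib

/-- `RecursiveIn₁ O f` means the partial function `f : ℕ →. ℕ` is partial recursive
relative to the oracle `O : ℕ →. ℕ`. -/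
inductive RecursiveIn₁ (O : ℕ →. ℕ) : (ℕ →. ℕ) → Prop
  | oracle : RecursiveIn₁ O O
  | zero : RecursiveIn₁ O (pure 0)
  | succ : RecursiveIn₁ O Nat.succ
  | left : RecursiveIn₁ O fun n => (Nat.unpair n).1
  | right : RecursiveIn₁ O fun n => (Nat.unpair n).2
  | pair {f g : ℕ →. ℕ} : RecursiveIn₁ O f → RecursiveIn₁ O g →
      RecursiveIn₁ O fun n => Nat.pair <$> f n <*> g n
  | comp {f g : ℕ →. ℕ} : RecursiveIn₁ O f → RecursiveIn₁ O g →
      RecursiveIn₁ O fun n => g n >>= f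
  | prec {f g : ℕ →. ℕ} : RecursiveIn₁ O f → RecursiveIn₁ O g →
      RecursiveIn₁ O (Nat.unpaired fun a n =>
        n.rec (f a) fun y IH => do let i ← IH; g (Nat.pair a (Nat.pair y i)))
  | rfind {f : ℕ →. ℕ} : RecursiveIn₁ O f →
      RecursiveIn₁ O fun a => Nat.rfind fun n => (fun m => m = 0) <$> f (Nat.pair a n)

/-- Turing reducibility on total functions in Baire space. -/
def TuringLE (f g : ℕ → ℕ) : Prop := RecursiveIn₁ (↑g) (↑f)

/-- Turing equivalence. -/
def TuringEquiv (f g : ℕ → ℕ) : Prop := TuringLE f g ∧ TuringLE g f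

/-- The join `f ⊕ g` of two elements of Baire space. -/
def fjoin (f g : ℕ → ℕ) : ℕ → ℕ := fun n => if n % 2 = 0 then f (n / 2) else g (n / 2)

/-- `A` is a splitting class: a non-empty countable class downwards closed under Turing
reducibility such that for every `f ∈ A` and finite `B ⊆ {g ∈ A : g ≰_T f}` there are
`h₀, h₁ ∈ A` above `f` whose join leaves `A`, and whose joins with any `g ∈ B` leave `A`. -/
def SplittingClass (A : Set (ℕ → ℕ)) : Prop :=
  A.Nonempty ∧ A.Countable ∧ (∀ f ∈ A, ∀ g : ℕ → ℕ, TuringLE g f → g ∈ A) ∧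
    ∀ f ∈ A, ∀ B : Set (ℕ → ℕ), B.Finite → B ⊆ {g | g ∈ A ∧ ¬ TuringLE g f} →
      ∃ h₀ ∈ A, ∃ h₁ ∈ A, TuringLE f h₀ ∧ TuringLE f h₁ ∧ fjoin h₀ h₁ ∉ A ∧
        ∀ g ∈ B, fjoin g h₀ ∉ A ∧ fjoin g h₁ ∉ A

/-- If a non-empty countable downwards closed class satisfies condition (ii) of
Proposition 3.2 (for every `f` in the class and finite set `B` of members not below `f`
there is `h` in the class strictly above `f` whose join with each `g ∈ B` leaves the
class), then it is a splitting class. -/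
theorem splitting_of_strict_extension (A : Set (ℕ → ℕ))
    (hne : A.Nonempty) (hct : A.Countable)
    (hdc : ∀ f ∈ A, ∀ g : ℕ → ℕ, TuringLE g f → g ∈ A)
    (hii : ∀ f ∈ A, ∀ B : Set (ℕ → ℕ), B.Finite → B ⊆ {g | g ∈ A ∧ ¬ TuringLE g f} →
      ∃ h ∈ A, (TuringLE f h ∧ ¬ TuringLE h f) ∧ ∀ g ∈ B, fjoin g h ∉ A) :
    SplittingClass A := by
  refine ⟨hne, hct, hdc, fun f hf B hB hBsub => ?_⟩
  obtain ⟨h₀, h₀A, ⟨hfh₀, hh₀f⟩, hB₀⟩ := hii f hf B hB hBsub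
  -- Since `h₀ ≰_T f`, `h₀` can be added to `B`; extending `f` again gives `h₁` with `h₀ ⊕ h₁ ∉ A`.
  have hsub : insert h₀ B ⊆ {g | g ∈ A ∧ ¬ TuringLE g f} :=
    Set.insert_subset ⟨h₀A, hh₀f⟩ hBsub
  obtain ⟨h₁, h₁A, ⟨hfh₁, -⟩, hB₁⟩ := hii f hf (insert h₀ B) (hB.insert h₀) hsub
  exact ⟨h₀, h₀A, h₁, h₁A, hfh₀, hfh₁, hB₁ h₀ (Set.mem_insert h₀ B),
    fun g hg => ⟨hB₀ g hg, hB₁ g (Set.mem_insert_of_mem h₀ hg)⟩⟩
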